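/- First-step bound: with notation as in the paper, if s is minimal such that W'[ℓ'+1..s] is represented by a leaf of the implicit suffix tree of W'[1..s], then (s-1)r - ℓ ≤ |f_i|, and therefore the number of characters of W read during the first step, sr - ℓ, is at most |f_i| + r. -/

import Mathlib

/-- `X` occurs in `W` starting at 0-based position `p` (1-based position `p+1`). -/
def OccursAt {α : Type*} (X W : List α) (p : ℕ) : Prop :=
  (W.drop p).take X.length = X

/-- `X` occurs in `W` starting at some 1-based position `≤ ℓ`,
    i.e. at a 0-based position `< ℓ`. -/
def OccursBefore {α : Type*} (X W : List α) (ℓ : ℕ) : Prop :=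
  ∃ p < ℓ, OccursAt X W p

/-- `fs` is the Lempel-Ziv factorization of `W`. -/
def IsLZFact {α : Type*} (W : List α) (fs : List (List α)) : Prop :=
  fs.flatten = W ∧ (∀ f ∈ fs, f ≠ []) ∧
  ∀ i : Fin fs.length,
    ((fs.get i).length = 1 ∧
        ¬ OccursBefore (fs.get i) W ((fs.take i).flatten).length) ∨
    (OccursBefore (fs.get i) W ((fs.take i).flatten).length ∧
      ∀ s ≤ W.length - ((fs.take i).flatten).length,
        OccursBefore ((W.drop ((fs.take i).flatten).length).take s) W
            ((fs.take i).flatten).length →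
        s ≤ (fs.get i).length)

/-- The meta-word of `W` with block size `r`: the word over the alphabet of
    `r`-tuples whose `j`-th character is the `j`-th block of `r` characters of
    `W`. -/
def metaWord {α : Type*} (r : ℕ) (W : List α) : List (List α) :=
  (List.range (W.length / r)).map fun j => (W.drop (j * r)).take r

/-- `X` is represented by a leaf of the implicit suffix tree of `V`: `X` is a
    nonempty suffix of `V` whose only occurrence in `V` is the suffix
    occurrence. -/
def RepLeaf {β : Type*} (V X : List β) : Prop :=
  X ≠ [] ∧ X <:+ V ∧ ∀ p, OccursAt X V p → p = V.length - X.length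

/-- `X` is represented by an inner (possibly implicit) vertex of the implicit
    suffix tree of `V`: `X` occurs at least twice in `V`, or `X` is a proper
    prefix of a longer occurrence (its occurrence extends to the right). -/
def RepInner {β : Type*} (V X : List β) : Prop :=
  (∃ p q, p ≠ q ∧ OccursAt X V p ∧ OccursAt X V q) ∨
    (∃ p, OccursAt X V p ∧ p + X.length < V.length)

/-!
If `(s - 1) r ≤ ℓ` there is nothing to prove. Otherwise `ℓ' < s - 1`, so by minimality of `s` the
suffix `W'[ℓ'+1..s-1]` of `W'[1..s-1]` is not a leaf: it also occurs at some block `p < ℓ'`.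
Flattening blocks, `W[ℓ'r+1..(s-1)r]` occurs at `pr + 1`; dropping its first `ℓ - ℓ'r` characters,
`W[ℓ+1..(s-1)r]` occurs at a position `≤ ℓ`, so the greedy choice of `f_i` gives
`(s - 1) r - ℓ ≤ |f_i|`.
-/

section Occurrences

variable {α : Type*} {X Y W : List α} {p : ℕ}

theorem occursAt_iff_prefix : OccursAt X W p ↔ X <+: W.drop p := by
  rw [OccursAt, List.prefix_iff_eq_take, eq_comm]

theorem OccursAt.of_prefix (hXY : X <+: Y) (h : OccursAt Y W p) : OccursAt X W p :=
  occursAt_iff_prefix.2 (hXY.trans (occursAt_iff_prefix.1 h))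

theorem OccursAt.drop (h : OccursAt X W p) (d : ℕ) : OccursAt (X.drop d) W (p + d) := by
  rw [occursAt_iff_prefix, ← List.drop_drop]
  exact (occursAt_iff_prefix.1 h).drop d

theorem OccursAt.of_take {n : ℕ} (h : OccursAt X (W.take n) p) : OccursAt X W p := by
  rw [occursAt_iff_prefix, List.drop_take] at h
  exact occursAt_iff_prefix.2 (h.trans (List.take_prefix _ _))

theorem OccursAt.add_length_le (h : OccursAt X W p) (hX : X ≠ []) :
    p + X.length ≤ W.length := by
  have hle := (occursAt_iff_prefix.1 h).length_le
  have hpos := List.length_pos_iff.2 hX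
  rw [List.length_drop] at hle
  omega

end Occurrences

theorem exists_lt_occursAt_drop_of_not_repLeaf {β : Type*} {V : List β} {j : ℕ}
    (hj : j < V.length) (h : ¬ RepLeaf V (V.drop j)) : ∃ p < j, OccursAt (V.drop j) V p := by
  have hne : V.drop j ≠ [] := by simpa using hj
  simp only [RepLeaf, hne, ne_eq, not_false_eq_true, List.drop_suffix, true_and, not_forall,
    List.length_drop] at h
  obtain ⟨p, hocc, hp⟩ := h
  have hle := hocc.add_length_le hne
  rw [List.length_drop] at hle
  exact ⟨p, by omega, hocc⟩

theorem List.get_prefix_drop_length_flatten_take {α : Type*} (fs : List (List α))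
    (i : Fin fs.length) : fs.get i <+: fs.flatten.drop (fs.take i).flatten.length := by
  have hsplit : fs.flatten = (fs.take i).flatten ++ (fs.get i ++ (fs.drop (i + 1)).flatten) := by
    rw [List.get_eq_getElem, ← List.flatten_cons, ← List.drop_eq_getElem_cons,
      ← List.flatten_append, List.take_append_drop]
  rw [hsplit, List.drop_left]
  exact List.prefix_append _ _

section MetaWord

variable {α : Type*} {r : ℕ} {W : List α}

@[simp]
theorem length_metaWord : (metaWord r W).length = W.length / r := by
  simp [metaWord]

theorem getElem?_metaWord {j : ℕ} (hj : j < (metaWord r W).length) :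
    (metaWord r W)[j]? = some ((W.drop (j * r)).take r) := by
  simp_all [metaWord]

theorem flatten_take_drop_metaWord {p n : ℕ} (h : p + n ≤ (metaWord r W).length) :
    (((metaWord r W).drop p).take n).flatten = (W.drop (p * r)).take (n * r) := by
  induction n with
  | zero => simp
  | succ n ih =>
    rw [List.take_add_one, List.flatten_append, ih (by omega), List.getElem?_drop,
      getElem?_metaWord (by omega), add_one_mul, List.take_add, List.drop_drop, add_mul]
    simp

theorem OccursAt.flatten_metaWord {X : List (List α)} {p : ℕ} (h : OccursAt X (metaWord r W) p) :
    OccursAt X.flatten W (p * r) := by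
  rcases eq_or_ne X [] with rfl | hX
  · simp [OccursAt]
  rw [← h, flatten_take_drop_metaWord (h.add_length_le hX)]
  exact occursAt_iff_prefix.2 (List.take_prefix _ _)

theorem mul_le_length_of_le_length_metaWord {n : ℕ} (h : n ≤ (metaWord r W).length) :
    n * r ≤ W.length :=
  (Nat.mul_le_mul_right r (length_metaWord ▸ h)).trans (Nat.div_mul_le_self _ _)

theorem occursBefore_of_occursAt_metaWord {p q n ℓ : ℕ} (hr : 0 < r)
    (hqn : q + n ≤ (metaWord r W).length) (hqℓ : q * r ≤ ℓ) (hpq : p < q)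
    (h : OccursAt (((metaWord r W).drop q).take n) (metaWord r W) p) :
    OccursBefore ((W.drop ℓ).take ((q + n) * r - ℓ)) W ℓ := by
  have hW := h.flatten_metaWord.drop (ℓ - q * r)
  rw [flatten_take_drop_metaWord hqn, List.drop_take, List.drop_drop,
    Nat.add_sub_cancel' hqℓ] at hW
  have hpr : (p + 1) * r ≤ q * r := Nat.mul_le_mul_right r hpq
  rw [add_one_mul] at hpr
  refine ⟨p * r + (ℓ - q * r), by omega, ?_⟩
  rwa [add_mul, show q * r + n * r - ℓ = n * r - (ℓ - q * r) by omega]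

end MetaWord

theorem IsLZFact.length_le_of_occursBefore {α : Type*} {W Y : List α} {fs : List (List α)}
    (h : IsLZFact W fs) (i : Fin fs.length)
    (hY : Y <+: W.drop (fs.take i).flatten.length)
    (hocc : OccursBefore Y W (fs.take i).flatten.length) :
    Y.length ≤ (fs.get i).length := by
  obtain ⟨hflat, -, hfact⟩ := h
  rcases hfact i with ⟨hlit, hnew⟩ | ⟨-, hmax⟩
  · by_contra! hlt
    have hfY : fs.get i <+: Y :=
      List.prefix_of_prefix_length_le (hflat ▸ fs.get_prefix_drop_length_flatten_take i) hY
        hlt.le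
    obtain ⟨q, hq, hoccq⟩ := hocc
    exact hnew ⟨q, hq, hoccq.of_prefix hfY⟩
  · have hlen := hY.length_le
    rw [List.length_drop] at hlen
    exact hmax _ hlen (List.prefix_iff_eq_take.1 hY ▸ hocc)

theorem lz_first_step_bound_general {α : Type*} (W : List α) (fs : List (List α))
    (h : IsLZFact W fs) (i : Fin fs.length) (r ℓ ℓ' s : ℕ)
    (hℓ : ℓ = ((fs.take i).flatten).length) (hℓ' : ℓ' = ℓ / r)
    (hr : 1 ≤ r)
    (hs : ℓ' < s) (hsW : s ≤ (metaWord r W).length)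
    (hmin : ∀ s', ℓ' < s' → s' < s →
      ¬ RepLeaf ((metaWord r W).take s')
          (((metaWord r W).drop ℓ').take (s' - ℓ'))) :
    (s - 1) * r ≤ (fs.get i).length + ℓ ∧
      s * r ≤ (fs.get i).length + r + ℓ := by
  have hℓ'r : ℓ' * r ≤ ℓ := hℓ' ▸ Nat.div_mul_le_self ℓ r
  have hbound : (s - 1) * r ≤ (fs.get i).length + ℓ := by
    by_contra! hlt
    have hℓ's : ℓ' < s - 1 := Nat.lt_of_mul_lt_mul_right (a := r) (by omega)
    have hV : ((metaWord r W).take (s - 1)).length = s - 1 := by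
      rw [List.length_take]; omega
    obtain ⟨p, hp, hocc⟩ := exists_lt_occursAt_drop_of_not_repLeaf (hV ▸ hℓ's)
      (by simpa only [List.drop_take] using hmin (s - 1) hℓ's (by omega))
    rw [List.drop_take] at hocc
    have hY := occursBefore_of_occursAt_metaWord hr (by omega) hℓ'r hp hocc.of_take
    rw [Nat.add_sub_cancel' hℓ's.le, hℓ] at hY
    have hfi := h.length_le_of_occursBefore i (List.take_prefix _ _) hY
    have hsW' : (s - 1) * r ≤ W.length := mul_le_length_of_le_length_metaWord (by omega)
    rw [List.length_take, List.length_drop, ← hℓ] at hfi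
    omega
  have hsr : s * r = (s - 1) * r + r := by rw [← add_one_mul, Nat.sub_add_cancel (by omega)]
  exact ⟨hbound, by omega⟩

/-- First-step bound: if `s` is minimal such that `W'[ℓ'+1..s]` is represented
    by a leaf of the implicit suffix tree of `W'[1..s]` (`W'` being the
    meta-word of `W`, `ℓ` the total length of the LZ factors `f_1,…,f_{i-1}`,
    `ℓ' = ⌊ℓ/r⌋` and `|f_i| ≥ r`), then `(s-1)r - ℓ ≤ |f_i|`, and therefore the
    number `sr - ℓ` of characters of `W` read during the first step is at most
    `|f_i| + r`. (Stated without truncated subtraction.) -/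
theorem lz_first_step_bound {α : Type*} (W : List α) (fs : List (List α))
    (h : IsLZFact W fs) (i : Fin fs.length) (r ℓ ℓ' s : ℕ)
    (hℓ : ℓ = ((fs.take i).flatten).length) (hℓ' : ℓ' = ℓ / r)
    (hr : 1 ≤ r) (hfi : r ≤ (fs.get i).length)
    (hs : ℓ' < s) (hsW : s ≤ (metaWord r W).length)
    (hleaf : RepLeaf ((metaWord r W).take s)
      (((metaWord r W).drop ℓ').take (s - ℓ')))
    (hmin : ∀ s', ℓ' < s' → s' < s →
      ¬ RepLeaf ((metaWord r W).take s')
          (((metaWord r W).drop ℓ').take (s' - ℓ'))) :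
    (s - 1) * r ≤ (fs.get i).length + ℓ ∧
      s * r ≤ (fs.get i).length + r + ℓ :=
  lz_first_step_bound_general W fs h i r ℓ ℓ' s hℓ hℓ' hr hs hsW hmin
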